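/- Let α > 0, m ∈ ℕ, and let φ(z) = a z (1 + h(z)) with |a| = 1, h holomorphic on B(0,r), h(0) = 0, |h(z)| ≤ 1/2 on B(0,r). Define, on the slit disc where all branches are principal, F(z) := φ(z)^α (Log φ(z))^m using Log φ(z) = Log a + Log(1 + h(z)) + Log z. Then there exist holomorphic functions g₀,…,g_m on B(0,r) such that F(z) = z^α Σ_{ℓ=0}^{m} g_ℓ(z) (Log z)^ℓ, and for each ℓ, |g_ℓ(z)| ≤ 2^{m+α} (|Arg a| + 3)^m for all z ∈ B(0,r). -/

import Mathlib

open Metric Finset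

/-!
Write `Log φ(z) = A(z) + Log z` with `A(z) = Log a + Log (1 + h z)`. Then
`φ(z)^α (Log φ(z))^m = z^α · e^{α A(z)} (A(z) + Log z)^m`, and the binomial theorem gives
`g_ℓ = (m choose ℓ) e^{α A} A^{m-ℓ}`. Since `1 + h` stays in the disc `B(1, 1/2)`, `A` is
holomorphic, `|e^{α A}| = |1 + h|^α ≤ 2^α` and `|A| ≤ |Arg a| + 3`.
-/

section LogPowerCoeff

open Complex

/-- The coefficient of `L^ℓ` in `e^{α A} (A + L)^m`. -/
noncomputable def logPowerCoeff (α : ℂ) (m ℓ : ℕ) (A : ℂ) : ℂ :=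
  m.choose ℓ * cexp (α * A) * A ^ (m - ℓ)

lemma cexp_mul_mul_pow_eq_sum_logPowerCoeff (α A L : ℂ) (m : ℕ) :
    cexp (α * (A + L)) * (A + L) ^ m =
      cexp (α * L) * ∑ ℓ ∈ range (m + 1), logPowerCoeff α m ℓ A * L ^ ℓ := by
  rw [mul_add, Complex.exp_add, add_comm A L, add_pow, mul_sum, mul_sum]
  refine sum_congr rfl fun ℓ _ => ?_
  simp only [logPowerCoeff]
  ring

lemma differentiable_logPowerCoeff (α : ℂ) (m ℓ : ℕ) :
    Differentiable ℂ (logPowerCoeff α m ℓ) := by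
  unfold logPowerCoeff
  fun_prop

lemma norm_logPowerCoeff_le {α A : ℂ} {E B : ℝ} (m ℓ : ℕ)
    (hE : ‖cexp (α * A)‖ ≤ E) (hA : ‖A‖ ≤ B) (hB : 1 ≤ B) :
    ‖logPowerCoeff α m ℓ A‖ ≤ 2 ^ m * E * B ^ m := by
  have hchoose : ‖(m.choose ℓ : ℂ)‖ ≤ 2 ^ m := by
    rw [Complex.norm_natCast]
    exact_mod_cast Nat.choose_le_two_pow m ℓ
  have hpow : ‖A ^ (m - ℓ)‖ ≤ B ^ m := by
    rw [norm_pow]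
    calc ‖A‖ ^ (m - ℓ) ≤ B ^ (m - ℓ) := pow_le_pow_left₀ (norm_nonneg _) hA _
      _ ≤ B ^ m := pow_le_pow_right₀ hB (Nat.sub_le m ℓ)
  have hE0 : 0 ≤ E := (norm_nonneg _).trans hE
  unfold logPowerCoeff
  rw [norm_mul, norm_mul]
  exact mul_le_mul (mul_le_mul hchoose hE (norm_nonneg _) (by positivity)) hpow (norm_nonneg _)
    (by positivity)

end LogPowerCoeff

section PrincipalLog

open Complex

lemma norm_log_of_norm_eq_one {a : ℂ} (ha : ‖a‖ = 1) : ‖log a‖ = |arg a| := by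
  have hlog : log a = arg a * I := Complex.ext (by simp [log_re, ha]) (by simp [log_im])
  rw [hlog, norm_mul, norm_I, mul_one, norm_real, Real.norm_eq_abs]

lemma norm_cexp_mul_log_add_log {a w : ℂ} (ha : ‖a‖ = 1) (hw : w ≠ 0) (α : ℝ) :
    ‖cexp (α * (log a + log w))‖ = ‖w‖ ^ α := by
  have hre : ((α : ℂ) * (log a + log w)).re = Real.log ‖w‖ * α := by
    simp [log_re, ha, mul_comm]
  rw [norm_exp, hre, Real.rpow_def_of_pos (norm_pos_iff.mpr hw)]

end PrincipalLog

theorem log_power_composition_general (α : ℝ) (hα : 0 < α) (m : ℕ)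
    (r : ℝ) (a : ℂ) (ha : ‖a‖ = 1)
    (h : ℂ → ℂ) (hh : DifferentiableOn ℂ h (ball (0 : ℂ) r))
    (hb : ∀ z : ℂ, ‖z‖ < r → ‖h z‖ ≤ 1 / 2) :
    ∃ g : ℕ → ℂ → ℂ,
      (∀ ℓ ≤ m, DifferentiableOn ℂ (g ℓ) (ball (0 : ℂ) r)) ∧
      (∀ ℓ ≤ m, ∀ z : ℂ, ‖z‖ < r →
        ‖g ℓ z‖ ≤ (2 : ℝ) ^ ((m : ℝ) + α) * (|Complex.arg a| + 3) ^ m) ∧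
      (∀ z : ℂ, ‖z‖ < r → z ≠ 0 →
        Complex.exp ((α : ℂ) *
            (Complex.log a + Complex.log (1 + h z) + Complex.log z)) *
          (Complex.log a + Complex.log (1 + h z) + Complex.log z) ^ m =
        z ^ (α : ℂ) *
          ∑ ℓ ∈ range (m + 1), g ℓ z * (Complex.log z) ^ ℓ) := by
  set A : ℂ → ℂ := fun z => Complex.log a + Complex.log (1 + h z)
  have hslit : ∀ z, ‖z‖ < r → 1 + h z ∈ Complex.slitPlane := fun z hz =>
    Complex.mem_slitPlane_of_norm_lt_one ((hb z hz).trans_lt one_half_lt_one)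
  refine ⟨fun ℓ z => logPowerCoeff α m ℓ (A z), fun ℓ _ => ?_, fun ℓ _ z hz => ?_,
    fun z _ hz0 => ?_⟩
  · have hA : DifferentiableOn ℂ A (ball 0 r) :=
      (differentiableOn_const _).add <| ((differentiableOn_const 1).add hh).clog
        fun z hz => hslit z (mem_ball_zero_iff.mp hz)
    exact (differentiable_logPowerCoeff _ m ℓ).comp_differentiableOn hA
  · have hnorm : ‖1 + h z‖ ≤ 2 := by
      linarith [norm_add_le 1 (h z), norm_one (α := ℂ), hb z hz]
    have hE : ‖Complex.exp (α * A z)‖ ≤ 2 ^ α := by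
      rw [norm_cexp_mul_log_add_log ha (Complex.slitPlane_ne_zero (hslit z hz))]
      exact Real.rpow_le_rpow (norm_nonneg _) hnorm hα.le
    have hAz : ‖A z‖ ≤ |Complex.arg a| + 3 := by
      calc ‖A z‖ ≤ ‖Complex.log a‖ + ‖Complex.log (1 + h z)‖ := norm_add_le _ _
        _ ≤ |Complex.arg a| + 3 := by
          rw [norm_log_of_norm_eq_one ha]
          linarith [Complex.norm_log_one_add_half_le_self (hb z hz), hb z hz]
    calc ‖logPowerCoeff α m ℓ (A z)‖ ≤ 2 ^ m * 2 ^ α * (|Complex.arg a| + 3) ^ m :=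
          norm_logPowerCoeff_le m ℓ hE hAz (by linarith [abs_nonneg (Complex.arg a)])
      _ = (2 : ℝ) ^ ((m : ℝ) + α) * (|Complex.arg a| + 3) ^ m := by
          rw [Real.rpow_add two_pos, Real.rpow_natCast]
  · rw [Complex.cpow_def_of_ne_zero hz0, mul_comm (Complex.log z)]
    exact cexp_mul_mul_pow_eq_sum_logPowerCoeff _ (A z) _ m

/-- Lemma 1.20 of the paper in the case `k(φ) = 1`, `|a| = 1`, with principal
branches: writing `Log φ(z) = Log a + Log (1 + h z) + Log z`, the function
`φ(z)^α (Log φ(z))^m` equals `z^α Σ_{ℓ≤m} g_ℓ(z) (Log z)^ℓ` with holomorphic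
`g_ℓ` bounded by `2^{m+α} (|Arg a| + 3)^m` on `B(0,r)`. -/
theorem log_power_composition (α : ℝ) (hα : 0 < α) (m : ℕ)
    (r : ℝ) (hr : 0 < r) (a : ℂ) (ha : ‖a‖ = 1)
    (h : ℂ → ℂ) (hh : DifferentiableOn ℂ h (ball (0 : ℂ) r))
    (h0 : h 0 = 0) (hb : ∀ z : ℂ, ‖z‖ < r → ‖h z‖ ≤ 1 / 2) :
    ∃ g : ℕ → ℂ → ℂ,
      (∀ ℓ ≤ m, DifferentiableOn ℂ (g ℓ) (ball (0 : ℂ) r)) ∧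
      (∀ ℓ ≤ m, ∀ z : ℂ, ‖z‖ < r →
        ‖g ℓ z‖ ≤ (2 : ℝ) ^ ((m : ℝ) + α) * (|Complex.arg a| + 3) ^ m) ∧
      (∀ z : ℂ, ‖z‖ < r → z ≠ 0 →
        Complex.exp ((α : ℂ) *
            (Complex.log a + Complex.log (1 + h z) + Complex.log z)) *
          (Complex.log a + Complex.log (1 + h z) + Complex.log z) ^ m =
        z ^ (α : ℂ) *
          ∑ ℓ ∈ range (m + 1), g ℓ z * (Complex.log z) ^ ℓ) :=
  log_power_composition_general α hα m r a ha h hh hb
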